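/- arXiv:1209.1924 — 4 statements merged into one kernel-verified Lean document; each statement's English description precedes it below -/
import Mathlib

section
/- For all t ≥ 0, a ∈ ℝ and b < 0, the Jacobian determinant of the map Φ(t)(a,b) = (X(t,a,b), Z(t,a,b)) equals 1 − e^{2kb}, which is strictly positive. -/
noncomputable def gerstnerX (k c m t a b : ℝ) : ℝ :=
  a + (c - m) * t - Real.exp (k * b) / k * Real.sin (k * (a - m * t))

noncomputable def gerstnerZ (k m t a b : ℝ) : ℝ :=
  b + Real.exp (k * b) / k * Real.cos (k * (a - m * t))

/-!
With `E = e^{kb}` and `θ = k(a - mt)` the partial derivatives are `X_a = 1 - E cos θ`,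
`Z_b = 1 + E cos θ` and `X_b = Z_a = -E sin θ`, so the determinant is
`1 - E² (cos² θ + sin² θ) = 1 - e^{2kb}`, which is positive because `kb < 0`.
-/

open Real

theorem hasDerivAt_gerstnerX_in_a {k : ℝ} (hk : k ≠ 0) (c m t a b : ℝ) :
    HasDerivAt (fun a' => gerstnerX k c m t a' b)
      (1 - exp (k * b) * cos (k * (a - m * t))) a :=
  (((hasDerivAt_id' a).add_const ((c - m) * t)).sub
    ((((hasDerivAt_id' a).sub_const (m * t)).const_mul k).sin.const_mul
      (exp (k * b) / k))).congr_deriv (by field_simp)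

theorem hasDerivAt_gerstnerZ_in_a {k : ℝ} (hk : k ≠ 0) (m t a b : ℝ) :
    HasDerivAt (fun a' => gerstnerZ k m t a' b)
      (-(exp (k * b) * sin (k * (a - m * t)))) a :=
  (((((hasDerivAt_id' a).sub_const (m * t)).const_mul k).cos.const_mul
      (exp (k * b) / k)).const_add b).congr_deriv (by field_simp)

theorem hasDerivAt_exp_mul_div_self {k : ℝ} (hk : k ≠ 0) (b : ℝ) :
    HasDerivAt (fun b' => exp (k * b') / k) (exp (k * b)) b :=
  ((((hasDerivAt_id' b).const_mul k).exp).div_const k).congr_deriv (by field_simp)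

theorem hasDerivAt_gerstnerX_in_b {k : ℝ} (hk : k ≠ 0) (c m t a b : ℝ) :
    HasDerivAt (fun b' => gerstnerX k c m t a b')
      (-(exp (k * b) * sin (k * (a - m * t)))) b :=
  (((hasDerivAt_exp_mul_div_self hk b).mul_const (sin (k * (a - m * t)))).const_sub
    (a + (c - m) * t)).congr_deriv (by ring)

theorem hasDerivAt_gerstnerZ_in_b {k : ℝ} (hk : k ≠ 0) (m t a b : ℝ) :
    HasDerivAt (fun b' => gerstnerZ k m t a b')
      (1 + exp (k * b) * cos (k * (a - m * t))) b :=
  (hasDerivAt_id' b).add ((hasDerivAt_exp_mul_div_self hk b).mul_const _)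

theorem one_sub_mul_cos_mul_one_add_mul_cos_sub_mul_sin_sq (E θ : ℝ) :
    (1 - E * cos θ) * (1 + E * cos θ) - (-(E * sin θ)) * (-(E * sin θ)) = 1 - E ^ 2 := by
  linear_combination (-E ^ 2) * sin_sq_add_cos_sq θ

theorem stmt_1_general (k c m : ℝ) (hk : 0 < k) (t a b : ℝ) (hb : b < 0) :
    deriv (fun a' => gerstnerX k c m t a' b) a * deriv (fun b' => gerstnerZ k m t a b') b
      - deriv (fun b' => gerstnerX k c m t a b') b * deriv (fun a' => gerstnerZ k m t a' b) a
      = 1 - Real.exp (2 * k * b)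
    ∧ 0 < 1 - Real.exp (2 * k * b) := by
  rw [(hasDerivAt_gerstnerX_in_a hk.ne' c m t a b).deriv,
    (hasDerivAt_gerstnerZ_in_b hk.ne' m t a b).deriv,
    (hasDerivAt_gerstnerX_in_b hk.ne' c m t a b).deriv,
    (hasDerivAt_gerstnerZ_in_a hk.ne' m t a b).deriv,
    one_sub_mul_cos_mul_one_add_mul_cos_sub_mul_sin_sq, ← exp_nat_mul]
  refine ⟨by push_cast; ring_nf, sub_pos.2 (exp_lt_one_iff.2 ?_)⟩
  exact mul_neg_of_pos_of_neg (by positivity) hb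

/-- the Jacobian determinant X_a Z_b − X_b Z_a equals 1 − e^{2kb} > 0. -/
theorem stmt_1 (k c m : ℝ) (hk : 0 < k) (t a b : ℝ) (ht : 0 ≤ t) (hb : b < 0) :
    deriv (fun a' => gerstnerX k c m t a' b) a * deriv (fun b' => gerstnerZ k m t a b') b
      - deriv (fun b' => gerstnerX k c m t a b') b * deriv (fun a' => gerstnerZ k m t a' b) a
      = 1 - Real.exp (2 * k * b)
    ∧ 0 < 1 - Real.exp (2 * k * b) :=
  stmt_1_general k c m hk t a b hb
end

section
/- Euler equation constraint (first component): for the Gerstner map, the identity P_a = −ρ(X_{tt} + 2ωZ_t)X_a − ρ(Z_{tt} − 2ωX_t + g)Z_a reduces to P_a = −ρ·e^{kb}·sin(k(a−mt))·(km² + 2ωc − g); hence P_a vanishes identically if and only if km² + 2ωc − g = 0 (for all a, t, b, assuming ρ > 0, k > 0). -/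
/-!
With the phase `θ = k (a - m t)`, both `X_tt + 2ωZ_t` and `Z_tt - 2ωX_t + g` contain
`e^{kb} m (k m + 2ω)` times `sin θ`, resp. `-cos θ`; paired with `X_a = 1 - e^{kb} cos θ` and
`Z_a = -e^{kb} sin θ`, the terms quadratic in `e^{kb}` cancel, and what is left is
`e^{kb} sin θ (k m² + 2ωc - g)`. Evaluating at `θ = π / 2` shows that the bracket must vanish.
-/

open Real

namespace Gerstner

variable (k c m t a b : ℝ)

theorem hasDerivAt_phase_time : HasDerivAt (fun t' => k * (a - m * t')) (-(k * m)) t := by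
  simpa using (((hasDerivAt_id t).const_mul m).const_sub a).const_mul k

theorem hasDerivAt_phase_label : HasDerivAt (fun a' => k * (a' - m * t)) k a := by
  simpa using ((hasDerivAt_id a).sub_const (m * t)).const_mul k

theorem hasDerivAt_gerstnerX_time (hk : k ≠ 0) :
    HasDerivAt (fun t' => gerstnerX k c m t' a b)
      (c - m + exp (k * b) * m * cos (k * (a - m * t))) t := by
  refine ((((hasDerivAt_id t).const_mul (c - m)).const_add a).sub
    ((hasDerivAt_phase_time k m t a).sin.const_mul (exp (k * b) / k))).congr_deriv ?_
  field_simp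
  ring

theorem hasDerivAt_gerstnerZ_time (hk : k ≠ 0) :
    HasDerivAt (fun t' => gerstnerZ k m t' a b) (exp (k * b) * m * sin (k * (a - m * t))) t := by
  refine (((hasDerivAt_phase_time k m t a).cos.const_mul (exp (k * b) / k)).const_add
    b).congr_deriv ?_
  field_simp

theorem deriv_deriv_gerstnerX_time (hk : k ≠ 0) :
    deriv (deriv (fun t' => gerstnerX k c m t' a b)) t
      = exp (k * b) * k * m ^ 2 * sin (k * (a - m * t)) := by
  have hcos := (hasDerivAt_phase_time k m t a).cos
  have hXt : deriv (fun t' => gerstnerX k c m t' a b)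
      = fun t' => c - m + exp (k * b) * m * cos (k * (a - m * t')) :=
    funext fun t' => (hasDerivAt_gerstnerX_time k c m t' a b hk).deriv
  rw [hXt, ((hcos.const_mul (exp (k * b) * m)).const_add (c - m)).deriv]
  ring

theorem deriv_deriv_gerstnerZ_time (hk : k ≠ 0) :
    deriv (deriv (fun t' => gerstnerZ k m t' a b)) t
      = -(exp (k * b) * k * m ^ 2 * cos (k * (a - m * t))) := by
  have hsin := (hasDerivAt_phase_time k m t a).sin
  have hZt : deriv (fun t' => gerstnerZ k m t' a b)
      = fun t' => exp (k * b) * m * sin (k * (a - m * t')) :=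
    funext fun t' => (hasDerivAt_gerstnerZ_time k m t' a b hk).deriv
  rw [hZt, (hsin.const_mul (exp (k * b) * m)).deriv]
  ring

theorem hasDerivAt_gerstnerX_label (hk : k ≠ 0) :
    HasDerivAt (fun a' => gerstnerX k c m t a' b) (1 - exp (k * b) * cos (k * (a - m * t))) a := by
  refine (((hasDerivAt_id a).add_const ((c - m) * t)).sub
    ((hasDerivAt_phase_label k m t a).sin.const_mul (exp (k * b) / k))).congr_deriv ?_
  field_simp

theorem hasDerivAt_gerstnerZ_label (hk : k ≠ 0) :
    HasDerivAt (fun a' => gerstnerZ k m t a' b) (-(exp (k * b) * sin (k * (a - m * t)))) a := by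
  refine (((hasDerivAt_phase_label k m t a).cos.const_mul (exp (k * b) / k)).const_add
    b).congr_deriv ?_
  field_simp

/-- `P_a` as given by the first component of the Euler equation in a frame rotating with
angular speed `ω`. -/
noncomputable def pressureLabelDeriv (k ρ ω g c m t a b : ℝ) : ℝ :=
  -ρ * (deriv (deriv (fun t' => gerstnerX k c m t' a b)) t
          + 2 * ω * deriv (fun t' => gerstnerZ k m t' a b) t)
      * deriv (fun a' => gerstnerX k c m t a' b) a
    - ρ * (deriv (deriv (fun t' => gerstnerZ k m t' a b)) t
          - 2 * ω * deriv (fun t' => gerstnerX k c m t' a b) t + g)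
      * deriv (fun a' => gerstnerZ k m t a' b) a

theorem pressureLabelDeriv_eq (ρ ω g : ℝ) (hk : k ≠ 0) :
    pressureLabelDeriv k ρ ω g c m t a b
      = -ρ * exp (k * b) * sin (k * (a - m * t)) * (k * m ^ 2 + 2 * ω * c - g) := by
  rw [pressureLabelDeriv, deriv_deriv_gerstnerX_time k c m t a b hk,
    deriv_deriv_gerstnerZ_time k m t a b hk, (hasDerivAt_gerstnerX_time k c m t a b hk).deriv,
    (hasDerivAt_gerstnerZ_time k m t a b hk).deriv,
    (hasDerivAt_gerstnerX_label k c m t a b hk).deriv,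
    (hasDerivAt_gerstnerZ_label k m t a b hk).deriv]
  ring

theorem forall_pressureLabelDeriv_eq_zero_iff {ρ : ℝ} (ω g : ℝ) (hk : k ≠ 0)
    (hρ : ρ ≠ 0) :
    (∀ t a b, pressureLabelDeriv k ρ ω g c m t a b = 0)
      ↔ k * m ^ 2 + 2 * ω * c - g = 0 := by
  constructor
  · intro h
    have hphase : k * (π / (2 * k) - m * 0) = π / 2 := by
      field_simp
      ring
    have h0 := h 0 (π / (2 * k)) 0
    rw [pressureLabelDeriv_eq k c m 0 _ 0 ρ ω g hk, hphase, sin_pi_div_two] at h0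
    simpa [hρ] using h0
  · intro h t a b
    rw [pressureLabelDeriv_eq k c m t a b ρ ω g hk, h, mul_zero]

end Gerstner

theorem stmt_7_general (k ρ ω g c m : ℝ) (hk : 0 < k) (hρ : 0 < ρ) :
    (∀ t a b : ℝ,
      -ρ * (deriv (deriv (fun t' => gerstnerX k c m t' a b)) t
              + 2 * ω * deriv (fun t' => gerstnerZ k m t' a b) t)
          * deriv (fun a' => gerstnerX k c m t a' b) a
        - ρ * (deriv (deriv (fun t' => gerstnerZ k m t' a b)) t
              - 2 * ω * deriv (fun t' => gerstnerX k c m t' a b) t + g)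
          * deriv (fun a' => gerstnerZ k m t a' b) a
      = -ρ * Real.exp (k * b) * Real.sin (k * (a - m * t)) * (k * m ^ 2 + 2 * ω * c - g))
    ∧ ((∀ t a b : ℝ,
      -ρ * (deriv (deriv (fun t' => gerstnerX k c m t' a b)) t
              + 2 * ω * deriv (fun t' => gerstnerZ k m t' a b) t)
          * deriv (fun a' => gerstnerX k c m t a' b) a
        - ρ * (deriv (deriv (fun t' => gerstnerZ k m t' a b)) t
              - 2 * ω * deriv (fun t' => gerstnerX k c m t' a b) t + g)
          * deriv (fun a' => gerstnerZ k m t a' b) a = 0)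
      ↔ k * m ^ 2 + 2 * ω * c - g = 0) :=
  ⟨fun t a b => Gerstner.pressureLabelDeriv_eq k c m t a b ρ ω g hk.ne',
    Gerstner.forall_pressureLabelDeriv_eq_zero_iff k c m ω g hk.ne' hρ.ne'⟩

/-- the first Euler equation component reduces to
P_a = −ρ e^{kb} sin(k(a−mt)) (km² + 2ωc − g), and it vanishes identically iff
km² + 2ωc − g = 0. -/
theorem stmt_7 (k ρ ω g c m : ℝ) (hk : 0 < k) (hρ : 0 < ρ) (hω : 0 ≤ ω) (hg : 0 < g) :
    (∀ t a b : ℝ,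
      -ρ * (deriv (deriv (fun t' => gerstnerX k c m t' a b)) t
              + 2 * ω * deriv (fun t' => gerstnerZ k m t' a b) t)
          * deriv (fun a' => gerstnerX k c m t a' b) a
        - ρ * (deriv (deriv (fun t' => gerstnerZ k m t' a b)) t
              - 2 * ω * deriv (fun t' => gerstnerX k c m t' a b) t + g)
          * deriv (fun a' => gerstnerZ k m t a' b) a
      = -ρ * Real.exp (k * b) * Real.sin (k * (a - m * t)) * (k * m ^ 2 + 2 * ω * c - g))
    ∧ ((∀ t a b : ℝ,
      -ρ * (deriv (deriv (fun t' => gerstnerX k c m t' a b)) t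
              + 2 * ω * deriv (fun t' => gerstnerZ k m t' a b) t)
          * deriv (fun a' => gerstnerX k c m t a' b) a
        - ρ * (deriv (deriv (fun t' => gerstnerZ k m t' a b)) t
              - 2 * ω * deriv (fun t' => gerstnerX k c m t' a b) t + g)
          * deriv (fun a' => gerstnerZ k m t a' b) a = 0)
      ↔ k * m ^ 2 + 2 * ω * c - g = 0) :=
  stmt_7_general k ρ ω g c m hk hρ
end

section
/- Euler equation constraint (second component): for the Gerstner map, assuming km² + 2ωc = g, the left-hand side −ρ(X_{tt} + 2ωZ_t)X_b − ρ(Z_{tt} − 2ωX_t + g)Z_b equals ρm(km + 2ω)e^{2kb} + 2ωρ(c − m) − gρ, which is independent of a and t. -/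
open Real

lemma inner_hd (k m a t : ℝ) : HasDerivAt (fun t' : ℝ => k * (a - m * t')) (-(k * m)) t := by
  have h : HasDerivAt (fun t' : ℝ => a - m * t') (-m) t := by
    simpa using ((hasDerivAt_id t).const_mul m).const_sub a
  simpa [mul_comm] using h.const_mul k

lemma hX_t (k c m a b t : ℝ) (hk : k ≠ 0) :
    HasDerivAt (fun t' => gerstnerX k c m t' a b)
      ((c - m) + m * Real.exp (k * b) * Real.cos (k * (a - m * t))) t := by
  have h1 : HasDerivAt (fun t' : ℝ => a + (c - m) * t') (c - m) t := by
    simpa using ((hasDerivAt_id t).const_mul (c - m)).const_add a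
  have h2 : HasDerivAt (fun t' : ℝ => Real.exp (k * b) / k * Real.sin (k * (a - m * t')))
      (Real.exp (k * b) / k * (Real.cos (k * (a - m * t)) * -(k * m))) t :=
    (((inner_hd k m a t).sin)).const_mul _
  have : HasDerivAt (fun t' => gerstnerX k c m t' a b) _ t := h1.sub h2
  convert this using 1
  field_simp
  ring

lemma hX_b (k c m a b t : ℝ) (hk : k ≠ 0) :
    HasDerivAt (fun b' => gerstnerX k c m t a b')
      (-(Real.exp (k * b) * Real.sin (k * (a - m * t)))) b := by
  have h2 : HasDerivAt (fun b' : ℝ => Real.exp (k * b') / k * Real.sin (k * (a - m * t)))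
      ((Real.exp (k * b) * k) / k * Real.sin (k * (a - m * t))) b := by
    have he : HasDerivAt (fun b' : ℝ => Real.exp (k * b')) (Real.exp (k * b) * k) b := by
      simpa [mul_comm, Function.comp_def] using (Real.hasDerivAt_exp (k*b)).comp b ((hasDerivAt_id b).const_mul k)
    simpa [div_mul_eq_mul_div] using (he.div_const k).mul_const (Real.sin (k * (a - m * t)))
  have : HasDerivAt (fun b' => gerstnerX k c m t a b') _ b := (hasDerivAt_const b (a + (c - m) * t)).sub h2
  convert this using 1
  field_simp
  ring

lemma hZ_t (k m a b t : ℝ) (hk : k ≠ 0) :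
    HasDerivAt (fun t' => gerstnerZ k m t' a b)
      (m * Real.exp (k * b) * Real.sin (k * (a - m * t))) t := by
  have h2 : HasDerivAt (fun t' : ℝ => Real.exp (k * b) / k * Real.cos (k * (a - m * t')))
      (Real.exp (k * b) / k * (-Real.sin (k * (a - m * t)) * -(k * m))) t :=
    ((inner_hd k m a t).cos).const_mul _
  have : HasDerivAt (fun t' => gerstnerZ k m t' a b) _ t := (hasDerivAt_const t b).add h2
  convert this using 1
  field_simp
  ring

lemma hZ_b (k m a b t : ℝ) (hk : k ≠ 0) :
    HasDerivAt (fun b' => gerstnerZ k m t a b')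
      (1 + Real.exp (k * b) * Real.cos (k * (a - m * t))) b := by
  have h2 : HasDerivAt (fun b' : ℝ => Real.exp (k * b') / k * Real.cos (k * (a - m * t)))
      ((Real.exp (k * b) * k) / k * Real.cos (k * (a - m * t))) b := by
    have he : HasDerivAt (fun b' : ℝ => Real.exp (k * b')) (Real.exp (k * b) * k) b := by
      simpa [mul_comm, Function.comp_def] using (Real.hasDerivAt_exp (k*b)).comp b ((hasDerivAt_id b).const_mul k)
    simpa [div_mul_eq_mul_div] using (he.div_const k).mul_const (Real.cos (k * (a - m * t)))
  have : HasDerivAt (fun b' => gerstnerZ k m t a b') _ b := (hasDerivAt_id b).add h2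
  convert this using 1
  field_simp

lemma dX_tt (k c m a b t : ℝ) (hk : k ≠ 0) :
    deriv (deriv (fun t' => gerstnerX k c m t' a b)) t
      = k * m ^ 2 * Real.exp (k * b) * Real.sin (k * (a - m * t)) := by
  have hf : deriv (fun t' => gerstnerX k c m t' a b)
      = fun t => (c - m) + m * Real.exp (k * b) * Real.cos (k * (a - m * t)) :=
    funext fun s => (hX_t k c m a b s hk).deriv
  rw [hf]
  have h : HasDerivAt (fun t => (c - m) + m * Real.exp (k * b) * Real.cos (k * (a - m * t)))
      (m * Real.exp (k * b) * (-Real.sin (k * (a - m * t)) * -(k * m))) t := by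
    simpa using
      (((inner_hd k m a t).cos).const_mul (m * Real.exp (k * b))).const_add (c - m)
  rw [h.deriv]; ring

lemma dZ_tt (k m a b t : ℝ) (hk : k ≠ 0) :
    deriv (deriv (fun t' => gerstnerZ k m t' a b)) t
      = -(k * m ^ 2 * Real.exp (k * b) * Real.cos (k * (a - m * t))) := by
  have hf : deriv (fun t' => gerstnerZ k m t' a b)
      = fun t => m * Real.exp (k * b) * Real.sin (k * (a - m * t)) :=
    funext fun s => (hZ_t k m a b s hk).deriv
  rw [hf]
  have h : HasDerivAt (fun t => m * Real.exp (k * b) * Real.sin (k * (a - m * t)))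
      (m * Real.exp (k * b) * (Real.cos (k * (a - m * t)) * -(k * m))) t :=
    ((inner_hd k m a t).sin).const_mul _
  rw [h.deriv]; ring

/-- assuming km² + 2ωc = g, the second Euler component equals
ρm(km+2ω)e^{2kb} + 2ωρ(c−m) − gρ, independent of a and t. -/
theorem stmt_8 (k ρ ω g c m : ℝ) (hk : 0 < k) (hρ : 0 < ρ) (hω : 0 ≤ ω) (hg : 0 < g)
    (hc : k * m ^ 2 + 2 * ω * c = g) (t a b : ℝ) :
    -ρ * (deriv (deriv (fun t' => gerstnerX k c m t' a b)) t
            + 2 * ω * deriv (fun t' => gerstnerZ k m t' a b) t)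
        * deriv (fun b' => gerstnerX k c m t a b') b
      - ρ * (deriv (deriv (fun t' => gerstnerZ k m t' a b)) t
            - 2 * ω * deriv (fun t' => gerstnerX k c m t' a b) t + g)
        * deriv (fun b' => gerstnerZ k m t a b') b
    = ρ * m * (k * m + 2 * ω) * Real.exp (2 * k * b) + 2 * ω * ρ * (c - m) - g * ρ := by
  have hk' := hk.ne'
  rw [dX_tt k c m a b t hk', dZ_tt k m a b t hk', (hX_t k c m a b t hk').deriv,
    (hZ_t k m a b t hk').deriv, (hX_b k c m a b t hk').deriv, (hZ_b k m a b t hk').deriv]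
  have hsc : Real.sin (k * (a - m * t)) ^ 2 = 1 - Real.cos (k * (a - m * t)) ^ 2 := by
    have := Real.sin_sq_add_cos_sq (k * (a - m * t)); linarith
  have he2 : Real.exp (2 * k * b) = Real.exp (k * b) * Real.exp (k * b) := by
    rw [← Real.exp_add]; ring_nf
  rw [he2]
  subst hc
  linear_combination (ρ * m * (k * m + 2 * ω) * Real.exp (k*b) * Real.exp (k*b)) * hsc
end

section
/- Stagnation points for geophysical waves: if m = 0, then the Lagrangian velocity of every particle is (X_t, Z_t) = (c, 0); conversely, if m ≠ 0, then there is no pair (a,b) with b ≤ 0 such that (X_t, Z_t)(t,a,b) = (c, 0) for all t. -/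
open Real

section GerstnerVelocity

variable {k : ℝ} (c m t a b : ℝ)

lemma hasDerivAt_gerstnerPhase : HasDerivAt (fun t' => k * (a - m * t')) (-(k * m)) t := by
  simpa using (((hasDerivAt_id t).const_mul m).const_sub a).const_mul k

lemma hasDerivAt_gerstnerX (hk : k ≠ 0) :
    HasDerivAt (fun t' => gerstnerX k c m t' a b)
      (c - m + m * exp (k * b) * cos (k * (a - m * t))) t := by
  have hlin : HasDerivAt (fun t' => a + (c - m) * t') (c - m) t := by
    simpa using ((hasDerivAt_id t).const_mul (c - m)).const_add a
  refine (hlin.sub (((hasDerivAt_gerstnerPhase m t a).sin).const_mul (exp (k * b) / k))).congr_deriv ?_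
  field_simp
  ring

lemma hasDerivAt_gerstnerZ (hk : k ≠ 0) :
    HasDerivAt (fun t' => gerstnerZ k m t' a b) (m * exp (k * b) * sin (k * (a - m * t))) t := by
  refine ((((hasDerivAt_gerstnerPhase m t a).cos).const_mul (exp (k * b) / k)).const_add b).congr_deriv ?_
  field_simp

lemma exists_deriv_gerstnerZ_ne_zero (hk : k ≠ 0) (hm : m ≠ 0) :
    ∃ t, deriv (fun t' => gerstnerZ k m t' a b) t ≠ 0 := by
  refine ⟨(a - π / (2 * k)) / m, ?_⟩
  have hphase : k * (a - m * ((a - π / (2 * k)) / m)) = π / 2 := by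
    field_simp
    ring
  rw [(hasDerivAt_gerstnerZ m _ a b hk).deriv, hphase, sin_pi_div_two, mul_one]
  exact mul_ne_zero hm (exp_pos _).ne'

end GerstnerVelocity

/-- if m = 0 every particle has velocity (c,0); if m ≠ 0 no particle with b ≤ 0
has velocity (c,0) for all times. -/
theorem stmt_15 (k c m : ℝ) (hk : 0 < k) :
    (m = 0 → ∀ t a b : ℝ,
      deriv (fun t' => gerstnerX k c m t' a b) t = c
      ∧ deriv (fun t' => gerstnerZ k m t' a b) t = 0)
    ∧ (m ≠ 0 → ¬ ∃ a b : ℝ, b ≤ 0 ∧ ∀ t : ℝ,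
      deriv (fun t' => gerstnerX k c m t' a b) t = c
      ∧ deriv (fun t' => gerstnerZ k m t' a b) t = 0) := by
  constructor
  · rintro rfl t a b
    simp [(hasDerivAt_gerstnerX c 0 t a b hk.ne').deriv, (hasDerivAt_gerstnerZ 0 t a b hk.ne').deriv]
  · rintro hm ⟨a, b, -, hstag⟩
    obtain ⟨t, ht⟩ := exists_deriv_gerstnerZ_ne_zero m a b hk.ne' hm
    exact ht (hstag t).2
end
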